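/- arXiv:2603.26547 — 4 statements merged into one kernel-verified Lean document; each statement's English description precedes it below -/
import Mathlib

section
/- Let 1 ≤ k⋆ < k, L = log(n/δ) with n ≥ k ≥ 2 and δ ∈ (0,1), and suppose θ ∈ ℝ^k satisfies Σ_a θ_a = 0, min_c θ_c ≥ −L, and θ_b ≥ θ_a − 1 for all b ≤ k⋆ < a. Let π⋆ = Σ_{b=1}^{k⋆} exp(θ_b)/Σ_{a=1}^k exp(θ_a) and θ⋆ = Σ_{b=1}^{k⋆} θ_b. Then 1/π⋆ ≤ 9 k L/(θ⋆ + k⋆ + k⋆ L). -/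
open Real Finset

lemma chord' (l u x : ℝ) (hl : l ≤ x) (hu : x ≤ u) :
    (u - l) * Real.exp x ≤ (u - x) * Real.exp l + (x - l) * Real.exp u := by
  rcases eq_or_lt_of_le (hl.trans hu) with h | h
  · have hx1 : x = l := le_antisymm (h ▸ hu) hl
    subst hx1; rw [← h]; simp
  · have h1 : 0 < u - l := by linarith
    have hne : u - l ≠ 0 := h1.ne'
    have ha : (0:ℝ) ≤ (u - x)/(u - l) := div_nonneg (by linarith) h1.le
    have hb : (0:ℝ) ≤ (x - l)/(u - l) := div_nonneg (by linarith) h1.le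
    have hab : (u - x)/(u - l) + (x - l)/(u - l) = 1 := by field_simp; ring
    have key := convexOn_exp.2 (Set.mem_univ l) (Set.mem_univ u) ha hb hab
    have hx : ((u - x)/(u - l)) • l + ((x - l)/(u - l)) • u = x := by
      rw [smul_eq_mul, smul_eq_mul]; field_simp; ring
    rw [hx, smul_eq_mul, smul_eq_mul] at key
    have h2 := mul_le_mul_of_nonneg_left key h1.le
    calc (u - l) * Real.exp x
        ≤ (u - l) * ((u - x)/(u - l) * Real.exp l + (x - l)/(u - l) * Real.exp u) := h2
      _ = (u - x) * Real.exp l + (x - l) * Real.exp u := by field_simp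


/-- Bound on the inverse softmax mass of the optimal actions (Lemma 3, second part):
with `L = log (n/δ)`, zero-sum logits bounded below by `-L` and optimal logits
at least suboptimal logits minus one, `1/π⋆ ≤ 9 k L / (θ⋆ + k⋆ + k⋆ L)`. -/
theorem stmt4 (n k kstar : ℕ) (hnk : k ≤ n) (hk : 2 ≤ k)
    (hks : 1 ≤ kstar) (hkk : kstar < k)
    (δ : ℝ) (hδ : δ ∈ Set.Ioo (0:ℝ) 1)
    (L : ℝ) (hLdef : L = Real.log ((n : ℝ) / δ))
    (θ : Fin k → ℝ) (hsum : ∑ a, θ a = 0)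
    (hmin : ∀ c, -L ≤ θ c)
    (hgap : ∀ b : Fin k, b.val < kstar → ∀ a : Fin k, kstar ≤ a.val →
      θ b ≥ θ a - 1) :
    1 / ((∑ b ∈ Finset.univ.filter (fun b : Fin k => b.val < kstar),
            Real.exp (θ b)) / ∑ a, Real.exp (θ a))
      ≤ 9 * k * L /
        ((∑ b ∈ Finset.univ.filter (fun b : Fin k => b.val < kstar), θ b)
          + kstar + kstar * L) := by
  classical
  set S : Finset (Fin k) := Finset.univ.filter (fun b : Fin k => b.val < kstar) with hSdef
  set Sc : Finset (Fin k) := Finset.univ.filter (fun b : Fin k => ¬ b.val < kstar) with hScdef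
  -- cardinalities
  have cardS : S.card = kstar := by
    have hSeq : S = Finset.Iio (⟨kstar, hkk⟩ : Fin k) := by
      ext b; simp [hSdef, Fin.lt_def]
    rw [hSeq, Fin.card_Iio]
  have cardSc : (Sc.card : ℝ) = (k : ℝ) - kstar := by
    have h1 : S.card + Sc.card = k := by
      rw [hSdef, hScdef, Finset.card_filter_add_card_filter_not, Finset.card_univ,
        Fintype.card_fin]
    have : Sc.card = k - kstar := by omega
    rw [this]; push_cast [Nat.cast_sub hkk.le]; ring_nf
  -- basic positivity of L
  have hn2 : (2:ℝ) ≤ (n:ℝ) / δ := by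
    have hδ0 := hδ.1; have hδ1 := hδ.2
    have hn : (2:ℝ) ≤ (n:ℝ) := by exact_mod_cast hk.trans hnk
    have : (n:ℝ) ≤ (n:ℝ)/δ := by
      rw [le_div_iff₀ hδ0]; nlinarith
    linarith
  have hL2 : (1:ℝ)/2 ≤ L := by
    rw [hLdef]
    have h1 : Real.log 2 ≤ Real.log ((n:ℝ)/δ) := Real.log_le_log (by norm_num) hn2
    have h2 : (1:ℝ)/2 < Real.log 2 := by
      have := Real.log_two_gt_d9; linarith
    linarith
  have hL0 : 0 < L := by linarith
  set θs : ℝ := ∑ b ∈ S, θ b with hθsdef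
  have hkR : (0:ℝ) < kstar := by exact_mod_cast hks
  set m : ℝ := θs / kstar with hmdef
  have f1 : (kstar:ℝ) * m = θs := by
    rw [hmdef]; field_simp
  -- sum over Sc
  have hsplit : θs + ∑ a ∈ Sc, θ a = 0 := by
    rw [hθsdef, hSdef, hScdef, Finset.sum_filter_add_sum_filter_not, hsum]
  -- θs bounds
  have f3 : -((kstar:ℝ) * L) ≤ θs := by
    have : ∑ b ∈ S, (-L) ≤ ∑ b ∈ S, θ b := Finset.sum_le_sum (fun b _ => hmin b)
    rw [Finset.sum_const, cardS, nsmul_eq_mul] at this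
    rw [hθsdef]; linarith
  have f4 : θs ≤ ((k:ℝ) - kstar) * L := by
    have : ∑ a ∈ Sc, (-L) ≤ ∑ a ∈ Sc, θ a := Finset.sum_le_sum (fun a _ => hmin a)
    rw [Finset.sum_const, nsmul_eq_mul, cardSc] at this
    nlinarith [hsplit]
  have f5 : 0 ≤ m + L := by
    have h : m + L = (θs + kstar*L)/kstar := by
      rw [hmdef]; field_simp
    rw [h]; exact div_nonneg (by linarith) hkR.le
  set E : ℝ := Real.exp m with hEdef
  have hE0 : 0 < E := Real.exp_pos m
  set e1 : ℝ := Real.exp 1 with he1def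
  have he1 : e1 ≤ 3 := by
    have := Real.exp_one_lt_d9; rw [he1def]; linarith
  have he1' : 1 ≤ e1 := by
    have := Real.add_one_le_exp (1:ℝ); rw [he1def]; linarith
  set A : ℝ := ∑ b ∈ S, Real.exp (θ b) with hAdef
  set C : ℝ := ∑ a ∈ Sc, Real.exp (θ a) with hCdef
  have hC0 : 0 ≤ C := Finset.sum_nonneg (fun a _ => (Real.exp_pos _).le)
  have hA0 : 0 < A := by
    refine Finset.sum_pos (fun b _ => Real.exp_pos _) ⟨⟨0, by omega⟩, ?_⟩
    simp [hSdef]; omega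
  have hB : (∑ a, Real.exp (θ a)) = A + C := by
    rw [hAdef, hCdef, hSdef, hScdef, Finset.sum_filter_add_sum_filter_not]
  -- Jensen lower bound : kstar * E ≤ A
  have f6 : (kstar:ℝ) * E ≤ A := by
    have hpt : ∀ b ∈ S, E * (θ b - m + 1) ≤ Real.exp (θ b) := by
      intro b _
      have h1 : (θ b - m) + 1 ≤ Real.exp (θ b - m) := Real.add_one_le_exp _
      have h2 := mul_le_mul_of_nonneg_left h1 hE0.le
      rw [hEdef, ← Real.exp_add] at h2
      have h3 : m + (θ b - m) = θ b := by ring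
      rw [h3] at h2; rw [hEdef]; linarith
    have hsum2 := Finset.sum_le_sum hpt
    have hlhs : ∑ b ∈ S, E * (θ b - m + 1) = E * (θs - kstar * m + kstar) := by
      rw [← Finset.mul_sum]
      congr 1
      rw [Finset.sum_add_distrib, Finset.sum_sub_distrib, Finset.sum_const, Finset.sum_const,
        cardS, nsmul_eq_mul, nsmul_eq_mul, hθsdef]
      ring
    rw [hlhs] at hsum2
    have h4 : θs - kstar * m + kstar = kstar := by rw [← f1]; ring
    rw [h4] at hsum2
    rw [hAdef]; linarith
  -- upper bound on suboptimal logits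
  have hub : ∀ a ∈ Sc, θ a ≤ m + 1 := by
    intro a ha
    have ha' : kstar ≤ a.val := by
      simp [hScdef] at ha; omega
    have hpt : ∀ b ∈ S, θ a - 1 ≤ θ b := by
      intro b hb
      have hb' : b.val < kstar := by simp [hSdef] at hb; exact hb
      exact hgap b hb' a ha'
    have hsum3 : ∑ b ∈ S, (θ a - 1) ≤ θs := Finset.sum_le_sum hpt
    rw [Finset.sum_const, cardS, nsmul_eq_mul] at hsum3
    have : θ a - 1 ≤ m := by
      rw [hmdef, le_div_iff₀ hkR]; linarith
    linarith
  -- chord bound on C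
  set u1 : ℝ := m + 1 + L with hu1def
  have hu1pos : (1:ℝ) ≤ u1 := by rw [hu1def]; linarith
  have f7 : u1 * C ≤ ((k:ℝ) - kstar) * E + (((k:ℝ) - kstar) * L - θs) * (e1 * E) := by
    have hpt : ∀ a ∈ Sc, u1 * Real.exp (θ a) ≤
        u1 * Real.exp (-L) + (θ a + L) * (e1 * E) := by
      intro a ha
      have h1 := chord' (-L) (m + 1) (θ a) (hmin a) (hub a ha)
      have hmono : (m + 1 - θ a) * Real.exp (-L) ≤ u1 * Real.exp (-L) := by
        apply mul_le_mul_of_nonneg_right _ (Real.exp_pos _).le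
        rw [hu1def]; linarith [hmin a]
      have hexp : Real.exp (m + 1) = e1 * E := by
        rw [he1def, hEdef, ← Real.exp_add]; ring_nf
      have he2 : (m + 1 - -L) = u1 := by rw [hu1def]; ring
      rw [he2, hexp] at h1
      have he3 : (θ a - -L) = θ a + L := by ring
      rw [he3] at h1
      linarith
    have hsum4 := Finset.sum_le_sum hpt
    rw [← Finset.mul_sum, ← hCdef] at hsum4
    have hrhs : ∑ a ∈ Sc, (u1 * Real.exp (-L) + (θ a + L) * (e1 * E))
        = ((k:ℝ) - kstar) * (u1 * Real.exp (-L)) + (-θs + ((k:ℝ) - kstar) * L) * (e1 * E) := by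
      rw [Finset.sum_add_distrib, Finset.sum_const, nsmul_eq_mul, cardSc, ← Finset.sum_mul,
        Finset.sum_add_distrib, Finset.sum_const, nsmul_eq_mul, cardSc]
      have hScθ : ∑ a ∈ Sc, θ a = -θs := by linarith [hsplit]
      rw [hScθ]
    rw [hrhs] at hsum4
    -- (1+t) e^{-t} ≤ 1 where t = m + L
    have hdecay : u1 * Real.exp (-L) ≤ E := by
      have h1 : (m + L) + 1 ≤ Real.exp (m + L) := Real.add_one_le_exp _
      have h2 : Real.exp (-L) = E * Real.exp (-(m+L)) := by
        rw [hEdef, ← Real.exp_add]; ring_nf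
      rw [h2]
      have h3 : u1 * Real.exp (-(m+L)) ≤ 1 := by
        rw [hu1def]
        have h4 : 0 < Real.exp (-(m+L)) := Real.exp_pos _
        have h5 := mul_le_mul_of_nonneg_right h1 h4.le
        have h6 : Real.exp (m+L) * Real.exp (-(m+L)) = 1 := by
          rw [← Real.exp_add]; simp
        calc (m + 1 + L) * Real.exp (-(m+L)) = ((m+L)+1) * Real.exp (-(m+L)) := by ring
          _ ≤ Real.exp (m+L) * Real.exp (-(m+L)) := h5
          _ = 1 := h6
      calc u1 * (E * Real.exp (-(m+L))) = E * (u1 * Real.exp (-(m+L))) := by ring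
        _ ≤ E * 1 := mul_le_mul_of_nonneg_left h3 hE0.le
        _ = E := by ring
    have hkks : (0:ℝ) ≤ (k:ℝ) - kstar := by
      have : (kstar:ℝ) ≤ k := by exact_mod_cast hkk.le
      linarith
    linarith [mul_le_mul_of_nonneg_left hdecay hkks]
  -- final assembly
  set D : ℝ := θs + kstar + kstar * L with hDdef
  have hDu : D = kstar * u1 := by rw [hDdef, hu1def, ← f1]; ring
  have hD0 : 0 < D := by rw [hDdef]; linarith
  have hkL0 : 0 < (k:ℝ) * L := by
    have : (0:ℝ) < k := by positivity
    positivity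
  have hkks : (1:ℝ) ≤ (k:ℝ) - kstar := by
    have : (kstar:ℝ) + 1 ≤ k := by exact_mod_cast hkk
    linarith
  -- key scalar inequality
  have hkey : ((k:ℝ) - kstar) + e1 * (((k:ℝ) - kstar) * L - θs) ≤ 9 * k * L - D := by
    rw [hDdef]
    linarith [mul_nonneg (by linarith : (0:ℝ) ≤ e1 - 1) (by linarith : (0:ℝ) ≤ θs + kstar * L),
      mul_nonneg (by linarith : (0:ℝ) ≤ 3 - e1) hkL0.le,
      mul_nonneg (by linarith : (0:ℝ) ≤ 2*L - 1) (by positivity : (0:ℝ) ≤ (k:ℝ))]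
  have hX0 : (0:ℝ) ≤ ((k:ℝ) - kstar) + e1 * (((k:ℝ) - kstar) * L - θs) := by
    have hp : (0:ℝ) ≤ e1 * (((k:ℝ) - kstar) * L - θs) :=
      mul_nonneg (by linarith) (by linarith)
    linarith
  -- main product inequality
  have hmain : (A + C) * D ≤ 9 * k * L * A := by
    have h1 : (kstar:ℝ) * (u1 * C) ≤
        (kstar:ℝ) * (((k:ℝ) - kstar) * E + (((k:ℝ) - kstar) * L - θs) * (e1 * E)) :=
      mul_le_mul_of_nonneg_left f7 hkR.le
    have h2 : (kstar:ℝ) * (((k:ℝ) - kstar) * E + (((k:ℝ) - kstar) * L - θs) * (e1 * E))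
        = ((kstar:ℝ) * E) * (((k:ℝ) - kstar) + e1 * (((k:ℝ) - kstar) * L - θs)) := by ring
    have h3 : ((kstar:ℝ) * E) * (((k:ℝ) - kstar) + e1 * (((k:ℝ) - kstar) * L - θs))
        ≤ A * (9 * k * L - D) :=
      mul_le_mul f6 hkey hX0 hA0.le
    have h4 : C * D = (kstar:ℝ) * (u1 * C) := by rw [hDu]; ring
    have h5 : (A + C) * D = A * D + C * D := by ring
    have h6 : A * (9 * k * L - D) = 9 * k * L * A - A * D := by ring
    linarith
  -- convert goal
  rw [hB, one_div_div, div_le_div_iff₀ (by positivity) hD0]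
  linarith [hmain]
end

section
/- Consider the single-coordinate update θ_{t+1} = θ_t + ηY_t(1_{A_t=a} − π_{t,a}) where Y_t ∈ [0,1], π_{t,a} ∈ [0,1] is F_{t-1}-measurable with π_{t,a} ≤ exp(θ_{t,a}), E_{t-1}[1_{A_t=a}] = π_{t,a}, and 0 < η ≤ 1. Then E_{t-1}[exp(−θ_{t+1,a})] ≤ exp(−θ_{t,a}) + η + η². -/
open MeasureTheory Real


lemma exp_quad {x : ℝ} (h : |x| ≤ 1) : Real.exp x ≤ 1 + x + x ^ 2 := by
  have h2 := Real.exp_bound h (by norm_num : (0:ℕ) < 2)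
  have hs : ∑ m ∈ Finset.range 2, x ^ m / m.factorial = 1 + x := by
    simp [Finset.sum_range_succ]
  rw [hs] at h2
  have habs := (abs_le.mp h2).2
  have hx2 : |x| ^ 2 = x ^ 2 := sq_abs x
  rw [hx2] at habs
  norm_num [Nat.factorial] at habs
  nlinarith [sq_nonneg x]

/-- One-step supermartingale bound for the exponentiated negative logit:
with `θ' = θ + η * X` where `X = Y (1_{A=a} - p)` (`p` the softmax
probability `π_{t,a}`), `|X| ≤ 1`, `E[X | F] ≥ -η p`, `E[X² | F] ≤ p`,
`p ∈ [0,1]`, `p ≤ exp θ` and `0 < η ≤ 1`, one has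
`E[exp (-θ') | F] ≤ exp (-θ) + η + η²` a.e. -/
theorem stmt11 {Ω : Type*} {F : MeasurableSpace Ω} {m : MeasurableSpace Ω}
    (hFm : F ≤ m) {μ : Measure Ω} [IsProbabilityMeasure μ]
    (θ p X : Ω → ℝ) (η : ℝ) (hη0 : 0 < η) (hη1 : η ≤ 1)
    (hθF : StronglyMeasurable[F] θ) (hpF : StronglyMeasurable[F] p)
    (hXm : Measurable X) (hXbdd : ∀ ω, |X ω| ≤ 1)
    (hp01 : ∀ ω, p ω ∈ Set.Icc (0:ℝ) 1)
    (hpθ : ∀ ω, p ω ≤ Real.exp (θ ω))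
    (hdrift : ∀ᵐ ω ∂μ, -η * p ω ≤ (μ[X | F]) ω)
    (hsec : ∀ᵐ ω ∂μ, (μ[fun ω' => X ω' ^ 2 | F]) ω ≤ p ω) :
    ∀ᵐ ω ∂μ, (μ[fun ω' => Real.exp (-(θ ω' + η * X ω')) | F]) ω
      ≤ Real.exp (-θ ω) + η + η ^ 2 := by
  by_cases hI : Integrable (fun ω => Real.exp (-(θ ω + η * X ω))) μ
  swap
  · rw [condExp_of_not_integrable hI]
    filter_upwards with ω
    simp only [Pi.zero_apply]
    positivity
  -- notation
  set f : Ω → ℝ := fun ω => Real.exp (-θ ω) with hf_def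
  set g : Ω → ℝ := fun ω => 1 - η * X ω + η ^ 2 * X ω ^ 2 with hg_def
  have hfF : StronglyMeasurable[F] f := Real.continuous_exp.comp_stronglyMeasurable hθF.neg
  have hfm : AEStronglyMeasurable f μ := (hfF.mono hFm).aestronglyMeasurable
  -- integrability of f
  have hfint : Integrable f μ := by
    refine (hI.const_mul (Real.exp 1)).mono' hfm ?_
    filter_upwards with ω
    rw [Real.norm_eq_abs, abs_of_pos (Real.exp_pos _)]
    have h1 : η * X ω ≤ 1 := by
      have := (abs_le.mp (hXbdd ω)).2
      nlinarith [abs_le.mp (hXbdd ω)]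
    have : Real.exp (-θ ω) = Real.exp (-(θ ω + η * X ω)) * Real.exp (η * X ω) := by
      rw [← Real.exp_add]; ring_nf
    rw [this]
    have := Real.exp_le_exp.mpr h1
    nlinarith [Real.exp_pos (-(θ ω + η * X ω)), Real.exp_pos (η * X ω)]
  -- integrability of X and X²
  have hXi : Integrable X μ := by
    refine (integrable_const (1:ℝ)).mono' hXm.aestronglyMeasurable ?_
    filter_upwards with ω; simpa using hXbdd ω
  have hX2i : Integrable (fun ω => X ω ^ 2) μ := by
    refine (integrable_const (1:ℝ)).mono' ((hXm.pow_const 2).aestronglyMeasurable) ?_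
    filter_upwards with ω
    rw [Real.norm_eq_abs, abs_pow]
    calc |X ω| ^ 2 ≤ 1 ^ 2 := by
          exact pow_le_pow_left₀ (abs_nonneg _) (hXbdd ω) 2
      _ = 1 := one_pow 2
  have hgi : Integrable g μ := by
    have := ((integrable_const (1:ℝ)).sub (hXi.const_mul η)).add (hX2i.const_mul (η ^ 2))
    exact this.congr (by filter_upwards with ω; simp [hg_def])
  have hgm : AEStronglyMeasurable g μ := hgi.aestronglyMeasurable
  -- integrability of f * g
  have hfgi : Integrable (f * g) μ := by
    have hb : ∃ C, ∀ ω, ‖g ω‖ ≤ C := by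
      refine ⟨3, fun ω => ?_⟩
      have h1 := abs_le.mp (hXbdd ω)
      have h2 : X ω ^ 2 ≤ 1 := by nlinarith
      have h3 : (0:ℝ) ≤ X ω ^ 2 := sq_nonneg _
      rw [Real.norm_eq_abs, abs_le]
      constructor <;> simp only [hg_def] <;> nlinarith
    have := hfint.bdd_mul hgm (Filter.Eventually.of_forall hb.choose_spec)
    exact this.congr (by filter_upwards with ω; simp [mul_comm])
  -- pointwise bound  exp(-(θ+ηX)) ≤ f * g
  have hpt : (fun ω => Real.exp (-(θ ω + η * X ω))) ≤ᵐ[μ] f * g := by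
    filter_upwards with ω
    have hb : |-(η * X ω)| ≤ 1 := by
      rw [abs_neg, abs_mul, abs_of_pos hη0]
      nlinarith [hXbdd ω, abs_nonneg (X ω)]
    have h1 : Real.exp (-(η * X ω)) ≤ 1 - η * X ω + η ^ 2 * X ω ^ 2 := by
      have := exp_quad hb
      calc Real.exp (-(η * X ω)) ≤ 1 + -(η * X ω) + (-(η * X ω)) ^ 2 := this
        _ = 1 - η * X ω + η ^ 2 * X ω ^ 2 := by ring
    have heq : Real.exp (-(θ ω + η * X ω)) = Real.exp (-θ ω) * Real.exp (-(η * X ω)) := by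
      rw [← Real.exp_add]; ring_nf
    calc Real.exp (-(θ ω + η * X ω)) = Real.exp (-θ ω) * Real.exp (-(η * X ω)) := heq
      _ ≤ Real.exp (-θ ω) * (1 - η * X ω + η ^ 2 * X ω ^ 2) :=
          mul_le_mul_of_nonneg_left h1 (Real.exp_pos _).le
      _ = (f * g) ω := rfl
  have hmono := condExp_mono (m := F) hI hfgi hpt
  -- pull-out
  have hpull : μ[f * g|F] =ᵐ[μ] f * μ[g|F] := condExp_mul_of_stronglyMeasurable_left hfF hfgi hgi
  -- linearity
  have hg_split : g = ((fun _ => (1:ℝ)) - η • X) + η ^ 2 • (fun ω => X ω ^ 2) := by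
    funext ω
    simp only [hg_def, Pi.add_apply, Pi.sub_apply, Pi.smul_apply, smul_eq_mul]
  have hlin : μ[g|F] =ᵐ[μ] (fun ω => 1 - η * (μ[X|F]) ω + η ^ 2 * (μ[fun ω' => X ω' ^ 2|F]) ω) := by
    rw [hg_split]
    have h1 := condExp_add ((integrable_const (1:ℝ)).sub (hXi.smul η)) (hX2i.smul (η ^ 2))
      (m := F) (μ := μ)
    have h2 := condExp_sub (integrable_const (1:ℝ)) (hXi.smul η) (m := F) (μ := μ)
    have h3 := condExp_smul (μ := μ) (m := F) η X
    have h4 := condExp_smul (μ := μ) (m := F) (η ^ 2) (fun ω => X ω ^ 2)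
    have h5 : (μ[(fun _ => (1:ℝ))|F]) = fun _ => (1:ℝ) := condExp_const hFm (1:ℝ)
    filter_upwards [h1, h2, h3, h4] with ω e1 e2 e3 e4
    simp only [Pi.add_apply, Pi.sub_apply, Pi.smul_apply, smul_eq_mul] at e1 e2 e3 e4 ⊢
    rw [e1, e2, e3, e4, h5]
  filter_upwards [hmono, hpull, hlin, hdrift, hsec] with ω h1 h2 h3 h4 h5
  have hE : 0 < Real.exp (-θ ω) := Real.exp_pos _
  have hEp : Real.exp (-θ ω) * p ω ≤ 1 := by
    have := hpθ ω
    have h0 : 0 ≤ p ω := (hp01 ω).1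
    calc Real.exp (-θ ω) * p ω ≤ Real.exp (-θ ω) * Real.exp (θ ω) :=
          mul_le_mul_of_nonneg_left this hE.le
      _ = 1 := by rw [← Real.exp_add]; simp
  have key : (f * μ[g|F]) ω ≤ Real.exp (-θ ω) + η + η ^ 2 := by
    rw [Pi.mul_apply, h3]
    set c1 := (μ[X|F]) ω
    set c2 := (μ[fun ω' => X ω' ^ 2|F]) ω
    have hp0 : 0 ≤ p ω := (hp01 ω).1
    have step1 : Real.exp (-θ ω) * (1 - η * c1 + η ^ 2 * c2)
        ≤ Real.exp (-θ ω) * (1 + η ^ 2 * p ω + η ^ 2 * p ω) := by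
      apply mul_le_mul_of_nonneg_left _ hE.le
      have hc1 : -η * p ω ≤ c1 := h4
      have hc2 : c2 ≤ p ω := h5
      nlinarith
    calc Real.exp (-θ ω) * (1 - η * c1 + η ^ 2 * c2)
        ≤ Real.exp (-θ ω) * (1 + η ^ 2 * p ω + η ^ 2 * p ω) := step1
      _ = Real.exp (-θ ω) + 2 * η ^ 2 * (Real.exp (-θ ω) * p ω) := by ring
      _ ≤ Real.exp (-θ ω) + 2 * η ^ 2 := by nlinarith [sq_nonneg η]
      _ ≤ Real.exp (-θ ω) + η + η ^ 2 := by nlinarith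
  calc (μ[fun ω' => Real.exp (-(θ ω' + η * X ω'))|F]) ω ≤ (μ[f * g|F]) ω := h1
    _ = (f * μ[g|F]) ω := h2
    _ ≤ Real.exp (-θ ω) + η + η ^ 2 := key
end

section
/- Under the policy gradient dynamics with η ≤ 1/2 and bounded rewards Y_t ∈ [0,1], for each arm a and δ ∈ (0,1), P(min_{1 ≤ t ≤ n} θ_{t,a} ≤ −log(n/δ)) ≤ δ. -/
open MeasureTheory Real Finset

/-! The bound holds surely, not only with probability `1 - δ`. The update preserves the sum
of the logits, which starts at `0`, so some logit is nonnegative and the softmax normaliser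
`Z = ∑ exp θ_b` is at least `1`. One update lowers `θ_a` by at most `η π_a Y ≤ 1/2`, and
`exp x ≤ 1 + 2x` on `[0, 1/2]` together with `π_a exp (-θ_a) = 1 / Z` gives
`exp (-θ_{t+1,a}) ≤ exp (-θ_{t,a}) + 2ηY / Z ≤ exp (-θ_{t,a}) + 1`. Hence
`exp (-θ_{t,a}) ≤ t ≤ n < n / δ` for `1 ≤ t ≤ n`, and the event is empty. -/

namespace PolicyGradient

variable {ι : Type*} [Fintype ι]

noncomputable def softmax (θ : ι → ℝ) (b : ι) : ℝ := exp (θ b) / ∑ c, exp (θ c)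

noncomputable def step [DecidableEq ι] (η : ℝ) (θ : ι → ℝ) (i : ι) (y : ℝ) (b : ι) : ℝ :=
  θ b + η * ((if i = b then 1 else 0) - softmax θ b) * y

lemma sum_exp_pos [Nonempty ι] (θ : ι → ℝ) : 0 < ∑ c, exp (θ c) :=
  sum_pos (fun _ _ => exp_pos _) univ_nonempty

lemma softmax_nonneg (θ : ι → ℝ) (b : ι) : 0 ≤ softmax θ b := by
  unfold softmax; positivity

lemma softmax_le_one (θ : ι → ℝ) (b : ι) : softmax θ b ≤ 1 :=
  div_le_one_of_le₀ (single_le_sum (fun c _ => (exp_pos (θ c)).le) (mem_univ b))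
    (sum_nonneg fun c _ => (exp_pos (θ c)).le)

lemma sum_softmax [Nonempty ι] (θ : ι → ℝ) : ∑ b, softmax θ b = 1 := by
  simp only [softmax]
  rw [← sum_div, div_self (sum_exp_pos θ).ne']

lemma softmax_mul_exp_neg (θ : ι → ℝ) (b : ι) :
    softmax θ b * exp (-θ b) = (∑ c, exp (θ c))⁻¹ := by
  rw [softmax, exp_neg, div_mul_eq_mul_div, mul_inv_cancel₀ (exp_pos _).ne', one_div]

lemma one_le_sum_exp_of_sum_eq_zero [Nonempty ι] {θ : ι → ℝ} (h : ∑ b, θ b = 0) :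
    1 ≤ ∑ b, exp (θ b) := by
  obtain ⟨b, hb⟩ : ∃ b, 0 ≤ θ b := by
    by_contra! hneg
    simpa [h] using sum_lt_sum_of_nonempty univ_nonempty fun c _ => hneg c
  calc 1 ≤ exp (θ b) := one_le_exp hb
    _ ≤ ∑ c, exp (θ c) := single_le_sum (fun c _ => (exp_pos (θ c)).le) (mem_univ b)

variable [DecidableEq ι]

lemma sum_step [Nonempty ι] (η : ℝ) (θ : ι → ℝ) (i : ι) (y : ℝ) :
    ∑ b, step η θ i y b = ∑ b, θ b := by
  have hind : ∑ b, (if i = b then (1 : ℝ) else 0) = 1 := by simp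
  calc ∑ b, step η θ i y b
      = ∑ b, θ b + η * y * (∑ b, (if i = b then (1 : ℝ) else 0) - ∑ b, softmax θ b) := by
        simp only [step, sum_add_distrib, ← sum_sub_distrib, mul_sum]
        congr 1
        exact sum_congr rfl fun b _ => by ring
    _ = ∑ b, θ b := by rw [hind, sum_softmax]; ring

lemma neg_step_le {η y : ℝ} (hη : 0 ≤ η) (hy : 0 ≤ y) (θ : ι → ℝ) (i a : ι) :
    -step η θ i y a ≤ -θ a + η * softmax θ a * y := by
  have : 0 ≤ η * (if i = a then 1 else 0) * y := by positivity
  simp only [step]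
  linarith

lemma exp_le_one_add_two_mul {x : ℝ} (h0 : 0 ≤ x) (h1 : x ≤ 1 / 2) : exp x ≤ 1 + 2 * x :=
  calc exp x ≤ 1 / (1 - x) := exp_bound_div_one_sub_of_interval h0 (by linarith)
    _ ≤ 1 + 2 * x := by rw [div_le_iff₀ (by linarith)]; nlinarith

lemma exp_neg_step_le [Nonempty ι] {θ : ι → ℝ} (hθ : ∑ b, θ b = 0) {η y : ℝ}
    (hη0 : 0 ≤ η) (hη : η ≤ 1 / 2) (hy : y ∈ Set.Icc (0 : ℝ) 1) (i a : ι) :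
    exp (-step η θ i y a) ≤ exp (-θ a) + 1 := by
  obtain ⟨hy0, hy1⟩ := hy
  set Z := ∑ c, exp (θ c)
  have hZ : 1 ≤ Z := one_le_sum_exp_of_sum_eq_zero hθ
  have hp := softmax_le_one θ a
  have hx0 : 0 ≤ η * softmax θ a * y := by have := softmax_nonneg θ a; positivity
  have hx1 : η * softmax θ a * y ≤ 1 / 2 :=
    calc η * softmax θ a * y ≤ η * 1 * 1 := by gcongr
      _ ≤ 1 / 2 := by linarith
  have hgain : 2 * η * y * Z⁻¹ ≤ 1 :=
    calc 2 * η * y * Z⁻¹ ≤ 2 * (1 / 2) * 1 * 1 := by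
          gcongr
          exact inv_le_one_of_one_le₀ hZ
      _ = 1 := by norm_num
  calc exp (-step η θ i y a)
      ≤ exp (-θ a + η * softmax θ a * y) := exp_le_exp.mpr (neg_step_le hη0 hy0 θ i a)
    _ = exp (-θ a) * exp (η * softmax θ a * y) := exp_add _ _
    _ ≤ exp (-θ a) * (1 + 2 * (η * softmax θ a * y)) := by
        gcongr; exact exp_le_one_add_two_mul hx0 hx1
    _ = exp (-θ a) + 2 * η * y * (softmax θ a * exp (-θ a)) := by ring
    _ ≤ exp (-θ a) + 1 := by rw [softmax_mul_exp_neg]; linarith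

section Trajectory

variable [Nonempty ι] {η : ℝ} {θ : ℕ → ι → ℝ} {A : ℕ → ι} {Y : ℕ → ℝ}

lemma sum_eq_zero_of_trajectory (hθ1 : θ 1 = 0)
    (hθ : ∀ t, 1 ≤ t → θ (t + 1) = step η (θ t) (A t) (Y t)) {t : ℕ} (ht : 1 ≤ t) :
    ∑ b, θ t b = 0 := by
  induction t, ht using Nat.le_induction with
  | base => simp [hθ1]
  | succ t ht ih => rw [hθ t ht, sum_step, ih]

lemma exp_neg_le_of_trajectory (hη0 : 0 ≤ η) (hη : η ≤ 1 / 2)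
    (hY : ∀ t, Y t ∈ Set.Icc (0 : ℝ) 1) (hθ1 : θ 1 = 0)
    (hθ : ∀ t, 1 ≤ t → θ (t + 1) = step η (θ t) (A t) (Y t)) (a : ι) {t : ℕ} (ht : 1 ≤ t) :
    exp (-θ t a) ≤ t := by
  induction t, ht using Nat.le_induction with
  | base => simp [hθ1]
  | succ t ht ih =>
    rw [hθ t ht]
    push_cast
    linarith [exp_neg_step_le (sum_eq_zero_of_trajectory hθ1 hθ ht) hη0 hη (hY t) (A t) a]

end Trajectory

end PolicyGradient

open PolicyGradient in
theorem stmt12_general {Ω : Type*} {m : MeasurableSpace Ω} {μ : Measure Ω}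
    (k n : ℕ)
    (η : ℝ) (hη0 : 0 < η) (hη : η ≤ 1 / 2)
    (A : ℕ → Ω → Fin k) (Y : ℕ → Ω → ℝ)
    (θ : ℕ → Ω → Fin k → ℝ) (p : ℕ → Ω → Fin k → ℝ)
    (hp : ∀ t ω a, p t ω a = Real.exp (θ t ω a) / ∑ b, Real.exp (θ t ω b))
    (hθ1 : ∀ ω a, θ 1 ω a = 0)
    (hrec : ∀ t, 1 ≤ t → ∀ ω a, θ (t + 1) ω a =
      θ t ω a + η * ((if A t ω = a then (1:ℝ) else 0) - p t ω a) * Y t ω)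
    (hY01 : ∀ t ω, Y t ω ∈ Set.Icc (0:ℝ) 1)
    (a : Fin k) (δ : ℝ) (hδ : δ ∈ Set.Ioo (0:ℝ) 1) :
    μ {ω | ∃ t ∈ Finset.Icc 1 n, θ t ω a ≤ -Real.log ((n : ℝ) / δ)}
      ≤ ENNReal.ofReal δ := by
  have : Nonempty (Fin k) := ⟨a⟩
  have hstep : ∀ ω t, 1 ≤ t → θ (t + 1) ω = step η (θ t ω) (A t ω) (Y t ω) := fun ω t ht =>
    funext fun b => by rw [hrec t ht, hp, step, softmax]
  have hempty : {ω | ∃ t ∈ Finset.Icc 1 n, θ t ω a ≤ -Real.log ((n : ℝ) / δ)} = ∅ := by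
    refine Set.eq_empty_of_forall_notMem fun ω ⟨t, ht, hle⟩ => ?_
    obtain ⟨ht1, htn⟩ := Finset.mem_Icc.mp ht
    have hbound := exp_neg_le_of_trajectory (θ := (θ · ω)) (A := (A · ω)) hη0.le hη
      (fun t => hY01 t ω) (funext (hθ1 ω)) (hstep ω) a ht1
    have htpos : (0 : ℝ) < t := by exact_mod_cast ht1
    have hlt : (t : ℝ) < n / δ := (lt_div_iff₀ hδ.1).2 <| by
      have : (t : ℝ) ≤ n := by exact_mod_cast htn
      nlinarith [hδ.2]
    have hlog : log t < log (n / δ) := log_lt_log htpos hlt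
    have : -θ t ω a ≤ log t := (le_log_iff_exp_le htpos).2 hbound
    linarith
  rw [hempty, measure_empty]
  exact bot_le

/-- Lemma 1.2: under the policy gradient dynamics with `η ≤ 1/2` and rewards
in `[0,1]`, for each arm `a` and `δ ∈ (0,1)`,
`P(min_{1 ≤ t ≤ n} θ_{t,a} ≤ -log (n/δ)) ≤ δ`. -/
theorem stmt12 {Ω : Type*} {m : MeasurableSpace Ω} {μ : Measure Ω}
    [IsProbabilityMeasure μ] (ℱ : Filtration ℕ m)
    (k n : ℕ) (hk : 1 ≤ k) (hn : 1 ≤ n)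
    (η : ℝ) (hη0 : 0 < η) (hη : η ≤ 1 / 2)
    (A : ℕ → Ω → Fin k) (Y : ℕ → Ω → ℝ)
    (θ : ℕ → Ω → Fin k → ℝ) (p : ℕ → Ω → Fin k → ℝ)
    (hp : ∀ t ω a, p t ω a = Real.exp (θ t ω a) / ∑ b, Real.exp (θ t ω b))
    (hθ1 : ∀ ω a, θ 1 ω a = 0)
    (hrec : ∀ t, 1 ≤ t → ∀ ω a, θ (t + 1) ω a =
      θ t ω a + η * ((if A t ω = a then (1:ℝ) else 0) - p t ω a) * Y t ω)
    (hY01 : ∀ t ω, Y t ω ∈ Set.Icc (0:ℝ) 1)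
    (hAmeas : ∀ t, 1 ≤ t → Measurable[ℱ t] (A t))
    (hYmeas : ∀ t, 1 ≤ t → Measurable[ℱ t] (Y t))
    (hθmeas : ∀ t, 1 ≤ t → ∀ a, Measurable[ℱ (t - 1)] (fun ω => θ t ω a))
    (hAlaw : ∀ t, 1 ≤ t → ∀ a : Fin k,
      μ[(fun ω => if A t ω = a then (1:ℝ) else 0) | ℱ (t - 1)]
        =ᵐ[μ] fun ω => p t ω a)
    (a : Fin k) (δ : ℝ) (hδ : δ ∈ Set.Ioo (0:ℝ) 1) :
    μ {ω | ∃ t ∈ Finset.Icc 1 n, θ t ω a ≤ -Real.log ((n : ℝ) / δ)}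
      ≤ ENNReal.ofReal δ :=
  stmt12_general (m := m) k n η hη0 hη A Y θ p hp hθ1 hrec hY01 a δ hδ
end

section
/- Let D = ηY(1_{A=b} − π_b − 1_{A=a} + π_a) with A ~ π, E[Y | A = c] = μ_c, μ_b = μ_1 = max_c μ_c, Δ_c = μ_1 − μ_c, R = Σ_c π_c Δ_c, and π_b = exp(Z)π_a. If Z ≥ −Δ_min/(2Δ_max) where Δ_min ≤ Δ_a and R ≤ Δ_max, then E[D] = η[π_a(exp(Z) − 1)R + π_a Δ_a] ≥ η π_a Δ_a / 2. -/
open MeasureTheory Real Finset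

/-- Drift bound (Eq. (2)): with `D = η Y (1_{A=b} - p b - 1_{A=a} + p a)`,
`A ~ p`, `E[Y ; A = c] = μ_c p c`, `b` optimal, gaps `Δ c = μ_b - μ_c`,
`R = ⟨p, Δ⟩ ≤ Δmax`, `p b = e^Z p a` and `Z ≥ -Δmin/(2 Δmax)` with
`0 < Δmin ≤ Δ a`, one gets
`E[D] = η (p a (e^Z - 1) R + p a Δ a) ≥ η p a Δ a / 2`. -/
theorem stmt14 {Ω : Type*} {m : MeasurableSpace Ω} {μ : Measure Ω}
    [IsProbabilityMeasure μ] (k : ℕ) (hk : 1 ≤ k)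
    (A : Ω → Fin k) (hAmeas : Measurable A)
    (Y : Ω → ℝ) (hYmeas : Measurable Y) (hY01 : ∀ ω, Y ω ∈ Set.Icc (0:ℝ) 1)
    (p : Fin k → ℝ) (hp0 : ∀ c, 0 ≤ p c) (hpsum : ∑ c, p c = 1)
    (hA : ∀ c, (∫ ω, (if A ω = c then (1:ℝ) else 0) ∂μ) = p c)
    (mu : Fin k → ℝ) (hmu01 : ∀ c, mu c ∈ Set.Icc (0:ℝ) 1)
    (hYA : ∀ c, (∫ ω, Y ω * (if A ω = c then (1:ℝ) else 0) ∂μ) = mu c * p c)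
    (a b : Fin k) (hab : a ≠ b)
    (hbopt : ∀ c, mu c ≤ mu b)
    (Δ : Fin k → ℝ) (hΔ : ∀ c, Δ c = mu b - mu c)
    (R : ℝ) (hR : R = ∑ c, p c * Δ c)
    (Δmin Δmax : ℝ) (hΔmin0 : 0 < Δmin) (hΔmina : Δmin ≤ Δ a)
    (hΔmax : 0 < Δmax) (hRmax : R ≤ Δmax)
    (Z : ℝ) (hZlb : Z ≥ -Δmin / (2 * Δmax)) (hZp : p b = Real.exp Z * p a)
    (η : ℝ) (hη : 0 < η)
    (D : Ω → ℝ)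
    (hD : ∀ ω, D ω = η * Y ω * ((if A ω = b then (1:ℝ) else 0) - p b
      - (if A ω = a then (1:ℝ) else 0) + p a)) :
    (∫ ω, D ω ∂μ) = η * (p a * (Real.exp Z - 1) * R + p a * Δ a) ∧
      (∫ ω, D ω ∂μ) ≥ η * p a * Δ a / 2 := by
  have hImeas : ∀ c : Fin k, Measurable (fun ω => if A ω = c then (1:ℝ) else 0) :=
    fun c => Measurable.ite (hAmeas (measurableSet_singleton c)) measurable_const
      measurable_const
  have hYint : Integrable Y μ := by
    apply (integrable_const (1:ℝ)).mono' hYmeas.aestronglyMeasurable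
    filter_upwards with ω
    have h := hY01 ω
    rw [Real.norm_eq_abs, abs_of_nonneg h.1]; exact h.2
  have hYIint : ∀ c : Fin k,
      Integrable (fun ω => Y ω * (if A ω = c then (1:ℝ) else 0)) μ := by
    intro c
    apply (integrable_const (1:ℝ)).mono' (hYmeas.mul (hImeas c)).aestronglyMeasurable
    filter_upwards with ω
    have h := hY01 ω
    rw [Real.norm_eq_abs]
    by_cases hc : A ω = c <;> simp [hc, abs_of_nonneg h.1, h.2]
  have hEY : ∫ ω, Y ω ∂μ = ∑ c, mu c * p c := by
    have hpt : ∀ ω, Y ω = ∑ c, Y ω * (if A ω = c then (1:ℝ) else 0) := by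
      intro ω
      simp [mul_ite, Finset.sum_ite_eq]
    calc ∫ ω, Y ω ∂μ = ∫ ω, ∑ c, Y ω * (if A ω = c then (1:ℝ) else 0) ∂μ := by
          congr 1; funext ω; exact hpt ω
      _ = ∑ c, ∫ ω, Y ω * (if A ω = c then (1:ℝ) else 0) ∂μ :=
          integral_finset_sum _ (fun c _ => hYIint c)
      _ = ∑ c, mu c * p c := Finset.sum_congr rfl (fun c _ => hYA c)
  set S := ∑ c, mu c * p c with hS
  have hED : ∫ ω, D ω ∂μ = η * (mu b * p b - p b * S - mu a * p a + p a * S) := by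
    have heq : D = fun ω =>
        (η * (Y ω * (if A ω = b then (1:ℝ) else 0))
          - η * p b * Y ω)
        + (- (η * (Y ω * (if A ω = a then (1:ℝ) else 0)))
          + η * p a * Y ω) := by
      funext ω; rw [hD ω]; ring
    rw [heq]
    beta_reduce
    have i1 : Integrable (fun ω => η * (Y ω * if A ω = b then (1:ℝ) else 0)
        - η * p b * Y ω) μ := ((hYIint b).const_mul η).sub (hYint.const_mul (η * p b))
    have i2 : Integrable (fun ω => -(η * (Y ω * if A ω = a then (1:ℝ) else 0))
        + η * p a * Y ω) μ := ((hYIint a).const_mul η).neg.add (hYint.const_mul (η * p a))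
    rw [integral_add i1 i2]
    rw [integral_sub ((hYIint b).const_mul η) (hYint.const_mul (η * p b))]
    have i3 : Integrable (fun ω => -(η * (Y ω * if A ω = a then (1:ℝ) else 0))) μ :=
      ((hYIint a).const_mul η).neg
    rw [integral_add i3 (hYint.const_mul (η * p a))]
    rw [integral_neg]
    rw [integral_const_mul, integral_const_mul, integral_const_mul, integral_const_mul]
    rw [hYA a, hYA b, hEY]
    ring
  have hRS : R = mu b - S := by
    rw [hR, hS]
    simp only [hΔ, mul_sub]
    rw [Finset.sum_sub_distrib, ← Finset.sum_mul, hpsum]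
    simp [mul_comm]
  have hEq : ∫ ω, D ω ∂μ = η * (p a * (Real.exp Z - 1) * R + p a * Δ a) := by
    rw [hED, hZp, hΔ a, hRS]; ring
  refine ⟨hEq, ?_⟩
  have hR0 : 0 ≤ R := by
    rw [hR]
    apply Finset.sum_nonneg
    intro c _
    exact mul_nonneg (hp0 c) (by rw [hΔ]; linarith [hbopt c])
  have hkey : (Real.exp Z - 1) * R ≥ -(Δmin / 2) := by
    rcases le_or_gt 0 (Real.exp Z - 1) with h | h
    · nlinarith
    · have h1 : Real.exp Z - 1 ≥ Z := by linarith [Real.add_one_le_exp Z]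
      have h4 : Z * Δmax ≥ (-Δmin / (2 * Δmax)) * Δmax := by nlinarith
      have h5 : (-Δmin / (2 * Δmax)) * Δmax = -(Δmin / 2) := by
        field_simp
      nlinarith
  have hpa0 : 0 ≤ p a := hp0 a
  rw [hEq]
  have hmain : p a * (Real.exp Z - 1) * R + p a * Δ a ≥ p a * Δ a / 2 := by
    have h1 : p a * (-(Δmin / 2)) ≤ p a * ((Real.exp Z - 1) * R) :=
      mul_le_mul_of_nonneg_left hkey hpa0
    have h2 : p a * Δmin ≤ p a * Δ a := mul_le_mul_of_nonneg_left hΔmina hpa0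
    nlinarith
  calc η * (p a * (Real.exp Z - 1) * R + p a * Δ a)
      ≥ η * (p a * Δ a / 2) := mul_le_mul_of_nonneg_left hmain hη.le
    _ = η * p a * Δ a / 2 := by ring
end
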